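/- arXiv:2110.03726 — 7 statements merged into one kernel-verified Lean document; each statement's English description precedes it below -/
import Mathlib

section
/- If P is an NN-bisimulation for a neural network N and v is a P-consistent valuation of layer i-1 (i.e., v assigns equal values to all nodes in the same equivalence class), then the valuation v' obtained by applying the semantics of layer i to v is also P-consistent. -/
/-- One-step (layer) semantics of a neural network layer. -/
def layerSem {α β : Type*} [Fintype α] (W : α → β → ℝ) (b : β → ℝ) (A : β → ℝ → ℝ)
    (v : α → ℝ) : β → ℝ :=
  fun s' => A s' ((∑ s, W s s' * v s) + b s')

open Classical in
/-- Pre-sum of a set of previous-layer nodes into a node `s'`. -/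
noncomputable def preSum {α β : Type*} [Fintype α] (W : α → β → ℝ) (c : Set α) (s' : β) : ℝ :=
  ∑ s ∈ Finset.univ.filter (fun s => s ∈ c), W s s'

/-- A valuation is `P`-consistent if it is constant on classes. -/
def consistent {α : Type*} (P : Setoid α) (v : α → ℝ) : Prop :=
  ∀ s₁ s₂, P.r s₁ s₂ → v s₁ = v s₂

/-- One layer of the NN-bisimulation condition. -/
def isBisimStep {α β : Type*} [Fintype α] (W : α → β → ℝ) (b : β → ℝ) (A : β → ℝ → ℝ)
    (Pp : Setoid α) (Pn : Setoid β) : Prop :=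
  ∀ s₁ s₂ : β, Pn.r s₁ s₂ →
    A s₁ = A s₂ ∧ b s₁ = b s₂ ∧
    ∀ t : α, preSum W {x | Pp.r x t} s₁ = preSum W {x | Pp.r x t} s₂

/-- One layer of the δ-NN-bisimulation condition. -/
def isDeltaBisimStep {α β : Type*} [Fintype α] (W : α → β → ℝ) (b : β → ℝ) (A : β → ℝ → ℝ)
    (Pp : Setoid α) (Pn : Setoid β) (δ : ℝ) : Prop :=
  ∀ s₁ s₂ : β, Pn.r s₁ s₂ →
    A s₁ = A s₂ ∧ |b s₁ - b s₂| ≤ δ ∧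
    ∀ t : α, |preSum W {x | Pp.r x t} s₁ - preSum W {x | Pp.r x t} s₂| ≤ δ

/-- Semantics of the composition of the first `i` layers of a network. -/
def netSem (S : ℕ → Type) [∀ i, Fintype (S i)] (W : ∀ i, S i → S (i+1) → ℝ)
    (b : ∀ i, S (i+1) → ℝ) (A : ∀ i, S (i+1) → ℝ → ℝ) : (i : ℕ) → (S 0 → ℝ) → S i → ℝ
  | 0, v => v
  | (i+1), v => layerSem (W i) (b i) (A i) (netSem S W b A i v)

/-- Quotient weights: pre-sum of a class into a representative. -/
noncomputable def qW {α β : Type*} [Fintype α] (Pp : Setoid α) (Pn : Setoid β)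
    (W : α → β → ℝ) (c : Quotient Pp) (d : Quotient Pn) : ℝ :=
  preSum W {x | Quotient.mk Pp x = c} d.out

/-- Quotient bias via representative. -/
noncomputable def qb {β : Type*} (Pn : Setoid β) (b : β → ℝ) (d : Quotient Pn) : ℝ := b d.out

/-- Quotient activation via representative. -/
noncomputable def qA {β : Type*} (Pn : Setoid β) (A : β → ℝ → ℝ) (d : Quotient Pn) : ℝ → ℝ :=
  A d.out

/-- Abstraction of a `P`-consistent valuation. -/
noncomputable def absVal {α : Type*} (P : Setoid α) (v : α → ℝ) (c : Quotient P) : ℝ := v c.out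

/-- `vh` is an ε-abstraction of `v`. -/
def isEpsAbs {α : Type*} (P : Setoid α) (ε : ℝ) (v : α → ℝ) (vh : Quotient P → ℝ) : Prop :=
  ∀ s : α, |vh (Quotient.mk P s) - v s| ≤ ε

/-- `v` is (ε,P)-consistent. -/
def epsConsistent {α : Type*} (P : Setoid α) (ε : ℝ) (v : α → ℝ) : Prop :=
  ∀ s₁ s₂, P.r s₁ s₂ → |v s₁ - v s₂| ≤ ε


/-!
A consistent valuation is constant on each class of `Pp`, so grouping the weighted input of a node
`s'` by classes writes it as `∑ c, preSum W c s' * v c`. Bisimilar nodes therefore receive equal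
input, and they share bias and activation.
-/

section

variable {α β : Type*} [Fintype α] (W : α → β → ℝ) {P : Setoid α} {v : α → ℝ}

open Classical in
theorem sum_fiber_mul_of_consistent (hv : consistent P v) (c : Quotient P) (s' : β) :
    ∑ s ∈ Finset.univ.filter (fun s => Quotient.mk P s = c), W s s' * v s =
      preSum W {x | P.r x c.out} s' * v c.out := by
  rw [preSum, Finset.sum_mul]
  refine Finset.sum_congr (by ext; simp [Quotient.mk_eq_iff_out]) fun s hs => ?_
  rw [hv s c.out (Finset.mem_filter.1 hs).2]

open Classical in
theorem sum_mul_eq_sum_preSum_of_consistent (hv : consistent P v) (s' : β) :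
    ∑ s, W s s' * v s = ∑ c : Quotient P, preSum W {x | P.r x c.out} s' * v c.out := by
  rw [← Finset.sum_fiberwise Finset.univ (Quotient.mk P)]
  exact Finset.sum_congr rfl fun c _ => sum_fiber_mul_of_consistent W hv c s'

theorem sum_mul_eq_of_preSum_eq (hv : consistent P v) {s₁ s₂ : β}
    (hpre : ∀ t, preSum W {x | P.r x t} s₁ = preSum W {x | P.r x t} s₂) :
    ∑ s, W s s₁ * v s = ∑ s, W s s₂ * v s := by
  simp only [sum_mul_eq_sum_preSum_of_consistent W hv, hpre]

end

/-- one-step preservation of `P`-consistency under a bisimulation. -/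
theorem bisim_step_preserves_consistent {α β : Type*} [Fintype α]
    (W : α → β → ℝ) (b : β → ℝ) (A : β → ℝ → ℝ)
    (Pp : Setoid α) (Pn : Setoid β)
    (hbis : isBisimStep W b A Pp Pn)
    (v : α → ℝ) (hv : consistent Pp v) :
    consistent Pn (layerSem W b A v) := by
  intro s₁ s₂ hs
  obtain ⟨hA, hb, hpre⟩ := hbis s₁ s₂ hs
  simp only [layerSem, hA, hb, sum_mul_eq_of_preSum_eq W hv hpre]
end

section
/- Let P be an NN-bisimulation for a neural network N, and let N/P be the quotient network whose nodes in layer i are the classes of P_i, with weights given by pre-sums, and biases and activations given by representatives. For any P-consistent valuation v of layer i-1, the abstraction of the one-step image of v in N equals the one-step image of the abstraction of v in N/P: α([[N]]_i(v)) = [[N/P]]_i(α(v)). -/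
/-! On a `Pp`-consistent valuation the weighted sum into a node regroups over the classes of
`Pp`: each class contributes its pre-sum into the node times the common value of `v` on it.
Both sides of the identity read the class of the node at the same representative `d.out`, so
the rest is definitional. -/

theorem consistent.absVal_mk {α : Type*} {P : Setoid α} {v : α → ℝ} (hv : consistent P v)
    (s : α) : absVal P v (Quotient.mk P s) = v s :=
  hv _ _ (Quotient.mk_out s)

theorem consistent.sum_mul_eq_sum_preSum_mul_absVal {α β : Type*} [Fintype α] {P : Setoid α}
    [Fintype (Quotient P)] {v : α → ℝ} (hv : consistent P v) (W : α → β → ℝ) (t : β) :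
    ∑ s, W s t * v s = ∑ c, preSum W {x | Quotient.mk P x = c} t * absVal P v c := by
  classical
  rw [← Finset.sum_fiberwise Finset.univ (Quotient.mk P)]
  refine Finset.sum_congr rfl fun c _ => ?_
  simp only [preSum, Finset.sum_mul]
  refine Finset.sum_congr (by ext; simp) fun s hs => ?_
  obtain rfl : Quotient.mk P s = c := by simpa using hs
  rw [hv.absVal_mk]

theorem quotient_layer_commutes_general {α β : Type*} [Fintype α]
    {Pp : Setoid α} {Pn : Setoid β} [Fintype (Quotient Pp)]
    (W : α → β → ℝ) (b : β → ℝ) (A : β → ℝ → ℝ)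
    (v : α → ℝ) (hv : consistent Pp v) :
    absVal Pn (layerSem W b A v) =
      layerSem (qW Pp Pn W) (qb Pn b) (qA Pn A) (absVal Pp v) := by
  funext d
  exact congrArg (fun x => qA Pn A d (x + qb Pn b d))
    (hv.sum_mul_eq_sum_preSum_mul_absVal W d.out)

/-- abstraction commutes with one layer of semantics:
`α([[N]]_i(v)) = [[N/P]]_i(α(v))` for `P`-consistent `v`. -/
theorem quotient_layer_commutes {α β : Type*} [Fintype α]
    {Pp : Setoid α} {Pn : Setoid β} [Fintype (Quotient Pp)]
    (W : α → β → ℝ) (b : β → ℝ) (A : β → ℝ → ℝ)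
    (hbis : isBisimStep W b A Pp Pn)
    (v : α → ℝ) (hv : consistent Pp v) :
    absVal Pn (layerSem W b A v) =
      layerSem (qW Pp Pn W) (qb Pn b) (qA Pn A) (absVal Pp v) :=
  quotient_layer_commutes_general W b A v hv
end

section
/- One-step error bound for approximate bisimulation: Let P be a δ-NN-bisimulation for N, let v be an (ε, P)-consistent valuation of layer i-1, let v̂ be any ε-abstraction of v, and let N' be any reduced network obtained by choosing representatives for pre-sums and biases. Then the one-step image [[N']]_i(v̂) is an ε'-abstraction of [[N]]_i(v), where ε' = a_i·ε + b_i with a_i = L(A_i)·|S_{i-1}|·||W_i||_∞ and b_i = L(A_i)·(|P_{i-1}|·||v||_∞ + 1)·δ, L(A_i) being a common Lipschitz constant of the activation functions of layer i. -/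
/-!
Fix a node `s'` of layer `i` and split both pre-activation sums along the classes of `P_{i-1}`.
For a class `c`, the reduced weight is the pre-sum of `c` into some `s₂ ~ s'`, within `δ` of
the pre-sum into `s'`, and `v̂ c` is within `ε` of every `v s` with `s ∈ c`. Comparing term by
term costs `|c| · Wmax · ε` for the values plus `vmax · δ` for the pre-sums, once `v̂ c` is
clamped to `[-vmax, vmax]`. Summing over the classes, adding the bias error `δ` and applying the
common `L`-Lipschitz activation of the class of `s'` gives the bound.
-/

lemma abs_sub_clamp_add_abs_clamp_sub_le {M a b : ℝ} (hb : |b| ≤ M) :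
    |a - max (-M) (min M a)| + |max (-M) (min M a) - b| ≤ |a - b| := by
  obtain ⟨hb₁, hb₂⟩ := abs_le.mp hb
  rcases le_total M a with h₁ | h₁
  · rw [min_eq_left h₁, max_eq_right (by linarith), abs_of_nonneg (by linarith),
      abs_of_nonneg (by linarith), abs_of_nonneg (by linarith)]
    linarith
  rcases le_total a (-M) with h₂ | h₂
  · rw [min_eq_right h₁, max_eq_left h₂, abs_of_nonpos (by linarith),
      abs_of_nonpos (by linarith), abs_of_nonpos (by linarith)]
    linarith
  · rw [min_eq_right h₁, max_eq_right h₂, sub_self, abs_zero, zero_add]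

open Finset in
/-- `x` is the abstract value of a class `F`; `w₁` and `w₂` are the weights out of `F` into
two related nodes. -/
lemma abs_sum_mul_sub_sum_mul_le {ι : Type*} (F : Finset ι) (w₁ w₂ v : ι → ℝ)
    {x M Wmax ε δ : ℝ} (hM : 0 ≤ M)
    (hw₁ : ∀ s ∈ F, |w₁ s| ≤ Wmax) (hw₂ : ∀ s ∈ F, |w₂ s| ≤ Wmax)
    (hv : ∀ s ∈ F, |v s| ≤ M) (hx : ∀ s ∈ F, |x - v s| ≤ ε)
    (hw : |∑ s ∈ F, w₁ s - ∑ s ∈ F, w₂ s| ≤ δ) :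
    |(∑ s ∈ F, w₁ s) * x - ∑ s ∈ F, w₂ s * v s| ≤ #F * (Wmax * ε) + M * δ := by
  -- Splitting at `x` itself would cost `|x| * δ`, and `|x|` may exceed `M` by `ε`;
  -- the clamp `u` of `x` to `[-M, M]` lies between `x` and every `v s`.
  set u := max (-M) (min M x)
  have hu : |u| ≤ M := abs_le.mpr ⟨le_max_left _ _, max_le (by linarith) (min_le_left _ _)⟩
  have hsplit : (∑ s ∈ F, w₁ s) * x - ∑ s ∈ F, w₂ s * v s
      = ∑ s ∈ F, (w₁ s * (x - u) + w₂ s * (u - v s))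
        + (∑ s ∈ F, w₁ s - ∑ s ∈ F, w₂ s) * u := by
    simp only [mul_sub, sub_mul, sum_sub_distrib, sum_add_distrib, ← sum_mul]
    ring
  have hterm : ∀ s ∈ F, |w₁ s * (x - u) + w₂ s * (u - v s)| ≤ Wmax * ε := fun s hs =>
    calc |w₁ s * (x - u) + w₂ s * (u - v s)|
        ≤ |w₁ s| * |x - u| + |w₂ s| * |u - v s| := by
          rw [← abs_mul, ← abs_mul]; exact abs_add_le _ _
      _ ≤ Wmax * (|x - u| + |u - v s|) := by
          rw [mul_add]; gcongr
          exacts [hw₁ s hs, hw₂ s hs]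
      _ ≤ Wmax * ε := by
          gcongr
          · exact (abs_nonneg _).trans (hw₁ s hs)
          · exact (abs_sub_clamp_add_abs_clamp_sub_le (hv s hs)).trans (hx s hs)
  rw [hsplit]
  calc _ ≤ ∑ s ∈ F, |w₁ s * (x - u) + w₂ s * (u - v s)|
        + |∑ s ∈ F, w₁ s - ∑ s ∈ F, w₂ s| * |u| :=
        (abs_add_le _ _).trans (by rw [abs_mul]; gcongr; exact abs_sum_le_sum_abs _ _)
    _ ≤ ∑ _s ∈ F, Wmax * ε + δ * M := by
        gcongr with s hs
        · exact hterm s hs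
        · exact (abs_nonneg _).trans hw
    _ = #F * (Wmax * ε) + M * δ := by rw [sum_const, nsmul_eq_mul, mul_comm δ]

open Classical in
lemma preSum_setOf_mk_eq {α β : Type*} [Fintype α] {P : Setoid α} (W : α → β → ℝ)
    (c : Quotient P) (s' : β) :
    preSum W {x | Quotient.mk P x = c} s' = ∑ s with Quotient.mk P s = c, W s s' := by
  unfold preSum
  congr

lemma setOf_rel_out {α : Type*} {P : Setoid α} (c : Quotient P) :
    {x | P.r x c.out} = {x | Quotient.mk P x = c} := by
  ext x
  exact Quotient.mk_eq_iff_out.symm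

lemma isDeltaBisimStep.abs_preSum_sub_le {α β : Type*} [Fintype α] {W : α → β → ℝ}
    {b : β → ℝ} {A : β → ℝ → ℝ} {Pp : Setoid α} {Pn : Setoid β} {δ : ℝ}
    (h : isDeltaBisimStep W b A Pp Pn δ) {s₁ s₂ : β} (hs : Pn.r s₁ s₂) (c : Quotient Pp) :
    |preSum W {x | Quotient.mk Pp x = c} s₁ - preSum W {x | Quotient.mk Pp x = c} s₂| ≤ δ := by
  simpa only [setOf_rel_out] using (h s₁ s₂ hs).2.2 c.out

open Finset in
lemma abs_sum_reduced_sub_sum_le {α β : Type*} [Fintype α] {Pp : Setoid α}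
    [Fintype (Quotient Pp)] {W : α → β → ℝ} {δ ε Wmax vmax : ℝ}
    (hW : ∀ (s : α) (s' : β), |W s s'| ≤ Wmax)
    {v : α → ℝ} (hvmax : ∀ s, |v s| ≤ vmax) {vh : Quotient Pp → ℝ} (hvh : isEpsAbs Pp ε v vh)
    {Wq : Quotient Pp → ℝ} {s' : β}
    (hWq : ∀ c, ∃ s₂, Wq c = preSum W {x | Quotient.mk Pp x = c} s₂ ∧
      |preSum W {x | Quotient.mk Pp x = c} s₂ - preSum W {x | Quotient.mk Pp x = c} s'| ≤ δ) :
    |∑ c, Wq c * vh c - ∑ s, W s s' * v s|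
      ≤ Fintype.card α * (Wmax * ε) + Fintype.card (Quotient Pp) * (vmax * δ) := by
  classical
  have hclass : ∀ c, |Wq c * vh c - ∑ s with Quotient.mk Pp s = c, W s s' * v s|
      ≤ #{s | Quotient.mk Pp s = c} * (Wmax * ε) + vmax * δ := by
    intro c
    obtain ⟨s₂, hWqc, hδ⟩ := hWq c
    rw [preSum_setOf_mk_eq, preSum_setOf_mk_eq] at hδ
    rw [hWqc, preSum_setOf_mk_eq]
    refine abs_sum_mul_sub_sum_mul_le _ _ _ _ ((abs_nonneg _).trans (hvmax c.out))
      (fun s _ => hW s s₂) (fun s _ => hW s s') (fun s _ => hvmax s) (fun s hs => ?_) hδ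
    rw [← (mem_filter.mp hs).2]
    exact hvh s
  rw [← sum_fiberwise univ (Quotient.mk Pp), ← sum_sub_distrib]
  calc _ ≤ ∑ c, |Wq c * vh c - ∑ s with Quotient.mk Pp s = c, W s s' * v s| :=
        abs_sum_le_sum_abs _ _
    _ ≤ ∑ c, (#{s | Quotient.mk Pp s = c} * (Wmax * ε) + vmax * δ) :=
        sum_le_sum fun c _ => hclass c
    _ = _ := by
        simp only [sum_add_distrib, ← nsmul_eq_mul, ← sum_const, sum_fiberwise]
        simp only [sum_const, card_univ, nsmul_eq_mul]

theorem delta_bisim_one_step_bound_general {α β : Type*} [Fintype α]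
    {Pp : Setoid α} {Pn : Setoid β} [Fintype (Quotient Pp)]
    (W : α → β → ℝ) (b : β → ℝ) (A : β → ℝ → ℝ)
    (δ ε L Wmax vmax : ℝ)
    (hL : ∀ (s' : β) (x y : ℝ), |A s' x - A s' y| ≤ L * |x - y|)
    (hbis : isDeltaBisimStep W b A Pp Pn δ)
    (hW : ∀ (s : α) (s' : β), |W s s'| ≤ Wmax)
    (v : α → ℝ) (hvmax : ∀ s, |v s| ≤ vmax)
    (vh : Quotient Pp → ℝ) (hvh : isEpsAbs Pp ε v vh)
    (Wq : Quotient Pp → Quotient Pn → ℝ) (bq : Quotient Pn → ℝ) (Aq : Quotient Pn → ℝ → ℝ)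
    (hWq : ∀ (c : Quotient Pp) (d : Quotient Pn), ∃ s' : β, Quotient.mk Pn s' = d ∧
      Wq c d = preSum W {x | Quotient.mk Pp x = c} s')
    (hbq : ∀ d : Quotient Pn, ∃ s' : β, Quotient.mk Pn s' = d ∧ bq d = b s')
    (hAq : ∀ d : Quotient Pn, ∃ s' : β, Quotient.mk Pn s' = d ∧ Aq d = A s') :
    isEpsAbs Pn
      (L * (Fintype.card α) * Wmax * ε + L * ((Fintype.card (Quotient Pp)) * vmax + 1) * δ)
      (layerSem W b A v) (layerSem Wq bq Aq vh) := by
  intro s'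
  obtain ⟨sA, hsA, hAsA⟩ := hAq (Quotient.mk Pn s')
  obtain ⟨sB, hsB, hbsB⟩ := hbq (Quotient.mk Pn s')
  have hA : Aq (Quotient.mk Pn s') = A s' := hAsA.trans (hbis sA s' (Quotient.exact hsA)).1
  have hb : |bq (Quotient.mk Pn s') - b s'| ≤ δ := hbsB ▸ (hbis sB s' (Quotient.exact hsB)).2.1
  have hsum := abs_sum_reduced_sub_sum_le hW hvmax hvh (Wq := fun c => Wq c (Quotient.mk Pn s'))
    fun c => by
      obtain ⟨s₂, hs₂, hWqc⟩ := hWq c (Quotient.mk Pn s')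
      exact ⟨s₂, hWqc, hbis.abs_preSum_sub_le (Quotient.exact hs₂) c⟩
  have hL0 : 0 ≤ L := by simpa using (abs_nonneg _).trans (hL s' 1 0)
  simp only [layerSem, hA]
  calc _ ≤ L * |(∑ c, Wq c (Quotient.mk Pn s') * vh c - ∑ s, W s s' * v s)
          + (bq (Quotient.mk Pn s') - b s')| := by rw [← add_sub_add_comm]; exact hL s' _ _
    _ ≤ L * (Fintype.card α * (Wmax * ε) + Fintype.card (Quotient Pp) * (vmax * δ) + δ) := by
        gcongr
        exact (abs_add_le _ _).trans (add_le_add hsum hb)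
    _ = _ := by ring

/-- one-step error bound for δ-bisimulation. -/
theorem delta_bisim_one_step_bound {α β : Type*} [Fintype α]
    {Pp : Setoid α} {Pn : Setoid β} [Fintype (Quotient Pp)]
    (W : α → β → ℝ) (b : β → ℝ) (A : β → ℝ → ℝ)
    (δ ε L Wmax vmax : ℝ)
    (hL : ∀ (s' : β) (x y : ℝ), |A s' x - A s' y| ≤ L * |x - y|)
    (hbis : isDeltaBisimStep W b A Pp Pn δ)
    (hW : ∀ (s : α) (s' : β), |W s s'| ≤ Wmax)
    (v : α → ℝ) (hvmax : ∀ s, |v s| ≤ vmax)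
    (hv : epsConsistent Pp ε v)
    (vh : Quotient Pp → ℝ) (hvh : isEpsAbs Pp ε v vh)
    (Wq : Quotient Pp → Quotient Pn → ℝ) (bq : Quotient Pn → ℝ) (Aq : Quotient Pn → ℝ → ℝ)
    (hWq : ∀ (c : Quotient Pp) (d : Quotient Pn), ∃ s' : β, Quotient.mk Pn s' = d ∧
      Wq c d = preSum W {x | Quotient.mk Pp x = c} s')
    (hbq : ∀ d : Quotient Pn, ∃ s' : β, Quotient.mk Pn s' = d ∧ bq d = b s')
    (hAq : ∀ d : Quotient Pn, ∃ s' : β, Quotient.mk Pn s' = d ∧ Aq d = A s') :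
    isEpsAbs Pn
      (L * (Fintype.card α) * Wmax * ε + L * ((Fintype.card (Quotient Pp)) * vmax + 1) * δ)
      (layerSem W b A v) (layerSem Wq bq Aq vh) :=
  delta_bisim_one_step_bound_general W b A δ ε L Wmax vmax hL hbis hW v hvmax vh hvh Wq bq Aq hWq
    hbq hAq
end

section
/- Closure under joins: if P and P' are two NN-bisimulations of a neural network N, then the partition generated by the union of their equivalence relations (the transitive closure of P ∪ P', taken layerwise) is also an NN-bisimulation of N. Consequently, there exists a coarsest NN-bisimulation of N. -/
/-! For a fixed partition `Pp` of the previous layer, the bisimulation condition says exactly that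
the next partition refines the kernel of `s' ↦ (A s', b s', (PreSum(S, s'))_S)`, and partitions
refining a fixed one are closed under arbitrary joins. Coarsening `Pp` keeps the condition, because
a class of the coarser partition is a union of classes of the finer one and its pre-sum is the sum
of theirs. Hence layerwise joins of bisimulations, even of all of them, are bisimulations, and the
join of all bisimulations is the coarsest one. -/

namespace Finset

variable {α M : Type*} [AddCommMonoid M] [Fintype α]

theorem sum_eq_sum_of_forall_class_sum_eq (r : Setoid α) [DecidableRel r.r] {s : Finset α}
    (hs : ∀ x ∈ s, ∀ y, r.r x y → y ∈ s) {f g : α → M}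
    (h : ∀ t, ∑ x with r.r x t, f x = ∑ x with r.r x t, g x) :
    ∑ x ∈ s, f x = ∑ x ∈ s, g x := by
  classical
  have hmaps : ∀ x ∈ s, Quotient.mk r x ∈ s.image (Quotient.mk r) :=
    fun x hx => mem_image_of_mem _ hx
  rw [← sum_fiberwise_of_maps_to hmaps f, ← sum_fiberwise_of_maps_to hmaps g]
  refine sum_congr rfl fun q hq => ?_
  obtain ⟨t, ht, rfl⟩ := mem_image.1 hq
  have hfiber : {x ∈ s | Quotient.mk r x = Quotient.mk r t} = ({x | r.r x t} : Finset α) := by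
    ext x
    simp only [mem_filter, mem_univ, true_and, Quotient.eq]
    exact ⟨And.right, fun hxt => ⟨hs t ht x (r.symm hxt), hxt⟩⟩
  rw [hfiber]
  exact h t

end Finset

section Bisim

variable {α β : Type*} [Fintype α] {W : α → β → ℝ} {b : β → ℝ} {A : β → ℝ → ℝ}

noncomputable def bisimSignature (W : α → β → ℝ) (b : β → ℝ) (A : β → ℝ → ℝ) (Pp : Setoid α)
    (s' : β) : (ℝ → ℝ) × ℝ × (α → ℝ) :=
  (A s', b s', fun t => preSum W {x | Pp.r x t} s')

theorem isBisimStep_iff_le_ker {Pp : Setoid α} {Pn : Setoid β} :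
    isBisimStep W b A Pp Pn ↔ Pn ≤ Setoid.ker (bisimSignature W b A Pp) := by
  simp only [isBisimStep, Setoid.le_def, Setoid.ker_def, bisimSignature, Prod.mk.injEq,
    funext_iff]

theorem preSum_eq_of_forall_class {Pp : Setoid α} {c : Set α}
    (hc : ∀ x ∈ c, ∀ y, Pp.r x y → y ∈ c) {s₁ s₂ : β}
    (h : ∀ t, preSum W {x | Pp.r x t} s₁ = preSum W {x | Pp.r x t} s₂) :
    preSum W c s₁ = preSum W c s₂ := by
  classical
  exact Finset.sum_eq_sum_of_forall_class_sum_eq Pp (by simpa using hc) h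

theorem isBisimStep.mono_left {Pp Pp' : Setoid α} {Pn : Setoid β} (hle : Pp ≤ Pp')
    (h : isBisimStep W b A Pp Pn) : isBisimStep W b A Pp' Pn := by
  intro s₁ s₂ hs
  obtain ⟨hA, hb, hsum⟩ := h s₁ s₂ hs
  refine ⟨hA, hb, fun t => preSum_eq_of_forall_class (fun x hx y hxy => ?_) hsum⟩
  exact Pp'.trans (Pp'.symm (hle hxy)) hx

theorem isBisimStep.sup {Pp Pp' : Setoid α} {Pn Pn' : Setoid β}
    (h : isBisimStep W b A Pp Pn) (h' : isBisimStep W b A Pp' Pn') :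
    isBisimStep W b A (Pp ⊔ Pp') (Pn ⊔ Pn') :=
  isBisimStep_iff_le_ker.2 <| sup_le
    (isBisimStep_iff_le_ker.1 (h.mono_left le_sup_left))
    (isBisimStep_iff_le_ker.1 (h'.mono_left le_sup_right))

theorem isBisimStep_iSup {ι : Sort*} {Pp : ι → Setoid α} {Pn : ι → Setoid β}
    (h : ∀ j, isBisimStep W b A (Pp j) (Pn j)) :
    isBisimStep W b A (⨆ j, Pp j) (⨆ j, Pn j) :=
  isBisimStep_iff_le_ker.2 <| iSup_le fun j =>
    isBisimStep_iff_le_ker.1 ((h j).mono_left (le_iSup Pp j))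

end Bisim

def IsNNBisim {S : ℕ → Type} [∀ i, Fintype (S i)] (W : ∀ i, S i → S (i+1) → ℝ)
    (b : ∀ i, S (i+1) → ℝ) (A : ∀ i, S (i+1) → ℝ → ℝ) (P : ∀ i, Setoid (S i)) : Prop :=
  ∀ i, isBisimStep (W i) (b i) (A i) (P i) (P (i+1))

namespace IsNNBisim

variable {S : ℕ → Type} [∀ i, Fintype (S i)] {W : ∀ i, S i → S (i+1) → ℝ}
  {b : ∀ i, S (i+1) → ℝ} {A : ∀ i, S (i+1) → ℝ → ℝ}

theorem sup {P P' : ∀ i, Setoid (S i)} (hP : IsNNBisim W b A P) (hP' : IsNNBisim W b A P') :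
    IsNNBisim W b A (P ⊔ P') :=
  fun i => (hP i).sup (hP' i)

theorem iSup {ι : Sort*} {P : ι → ∀ i, Setoid (S i)} (hP : ∀ j, IsNNBisim W b A (P j)) :
    IsNNBisim W b A (⨆ j, P j) := by
  intro i
  simp only [iSup_apply]
  exact isBisimStep_iSup fun j => hP j i

end IsNNBisim

/-- bisimulations are closed under (layerwise) joins of equivalence
relations; consequently there exists a coarsest NN-bisimulation. -/
theorem bisim_closed_under_join (S : ℕ → Type) [∀ i, Fintype (S i)]
    (W : ∀ i, S i → S (i+1) → ℝ) (b : ∀ i, S (i+1) → ℝ) (A : ∀ i, S (i+1) → ℝ → ℝ)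
    (P P' : ∀ i, Setoid (S i))
    (hP : ∀ i, isBisimStep (W i) (b i) (A i) (P i) (P (i+1)))
    (hP' : ∀ i, isBisimStep (W i) (b i) (A i) (P' i) (P' (i+1))) :
    (∀ i, isBisimStep (W i) (b i) (A i) (P i ⊔ P' i) (P (i+1) ⊔ P' (i+1))) ∧
    ∃ Q : ∀ i, Setoid (S i),
      (∀ i, isBisimStep (W i) (b i) (A i) (Q i) (Q (i+1))) ∧
      ∀ R : ∀ i, Setoid (S i),
        (∀ i, isBisimStep (W i) (b i) (A i) (R i) (R (i+1))) → ∀ i, R i ≤ Q i :=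
  ⟨IsNNBisim.sup hP hP',
    ⨆ R : {R // IsNNBisim W b A R}, R.1,
    IsNNBisim.iSup fun R => R.2,
    fun R hR => le_iSup (fun R : {R // IsNNBisim W b A R} => R.1) ⟨R, hR⟩⟩
end

section
/- Quotient size bound and semantic preservation: for an NN-bisimulation P of N, the quotient N/P has at most as many nodes in each layer as N (|P_i| ≤ |S_i|), and if every class of P_0 and P_k is a singleton, then for every input valuation v (automatically P-consistent at the input), [[N/P]](v ∘ rep) = [[N]](v) ∘ rep, where rep identifies singleton classes with their unique elements; i.e., N and N/P compute the same input-output function up to the bijections on input and output layers. -/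
open Classical in
lemma sum_grouped {α β : Type*} [Fintype α] (Pp : Setoid α) [Fintype (Quotient Pp)]
    (W : α → β → ℝ) (s' : β) (u : α → ℝ) (hu : ∀ s₁ s₂, Pp.r s₁ s₂ → u s₁ = u s₂) :
    ∑ s, W s s' * u s
      = ∑ c : Quotient Pp, preSum W {x | Quotient.mk Pp x = c} s' * u c.out := by
  classical
  rw [← Finset.sum_fiberwise Finset.univ (Quotient.mk Pp) (fun s => W s s' * u s)]
  refine Fintype.sum_congr _ _ (fun c => ?_)
  rw [preSum, Finset.sum_mul]
  refine Finset.sum_congr ?_ (fun s hs => ?_)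
  · ext x; simp [Set.mem_setOf_eq]
  · simp only [Finset.mem_filter] at hs
    have : Pp.r s c.out := by
      have := hs.2
      simp only [Set.mem_setOf_eq] at this
      exact Quotient.exact (by rw [this]; exact (Quotient.out_eq c).symm)
    rw [hu s c.out this]

/-- the quotient has at most as many nodes per layer, and when the input
and output partitions are into singletons, the quotient computes the same input-output
function up to the canonical identifications. -/
theorem quotient_size_and_semantics (S : ℕ → Type) [∀ i, Fintype (S i)]
    (P : ∀ i, Setoid (S i)) [∀ i, Fintype (Quotient (P i))]
    (W : ∀ i, S i → S (i+1) → ℝ) (b : ∀ i, S (i+1) → ℝ) (A : ∀ i, S (i+1) → ℝ → ℝ)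
    (hbis : ∀ i, isBisimStep (W i) (b i) (A i) (P i) (P (i+1))) (k : ℕ) :
    (∀ i, Fintype.card (Quotient (P i)) ≤ Fintype.card (S i)) ∧
    ((∀ x y : S 0, (P 0).r x y → x = y) → (∀ x y : S k, (P k).r x y → x = y) →
      ∀ (v : S 0 → ℝ) (d : Quotient (P k)),
        netSem (fun i => Quotient (P i)) (fun i => qW (P i) (P (i+1)) (W i))
            (fun i => qb (P (i+1)) (b i)) (fun i => qA (P (i+1)) (A i)) k
            (fun c => v c.out) d
          = netSem S W b A k v d.out) := by
  constructor
  · intro i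
    exact Fintype.card_le_of_surjective (Quotient.mk (P i)) Quotient.mk_surjective
  · intro h0 _ v d
    -- main induction
    suffices h : ∀ i, (∀ s₁ s₂ : S i, (P i).r s₁ s₂ →
        netSem S W b A i v s₁ = netSem S W b A i v s₂) ∧
        (∀ d : Quotient (P i),
          netSem (fun i => Quotient (P i)) (fun i => qW (P i) (P (i+1)) (W i))
            (fun i => qb (P (i+1)) (b i)) (fun i => qA (P (i+1)) (A i)) i
            (fun c => v c.out) d = netSem S W b A i v d.out) by
      exact (h k).2 d
    intro i
    induction i with
    | zero =>
      constructor
      · intro s₁ s₂ hr; rw [h0 s₁ s₂ hr]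
      · intro d; rfl
    | succ i ih =>
      obtain ⟨hcons, heq⟩ := ih
      constructor
      · intro s₁ s₂ hr
        obtain ⟨hA, hb, hps⟩ := hbis i s₁ s₂ hr
        show layerSem _ _ _ _ s₁ = layerSem _ _ _ _ s₂
        unfold layerSem
        rw [hA, hb, sum_grouped (P i) (W i) s₁ _ hcons,
            sum_grouped (P i) (W i) s₂ _ hcons]
        congr 2
        refine Fintype.sum_congr _ _ (fun c => ?_)
        have := hps c.out
        have hset : {x | (P i).r x c.out} = {x | Quotient.mk (P i) x = c} := by
          ext x
          simp only [Set.mem_setOf_eq]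
          constructor
          · intro h; rw [← Quotient.out_eq c]; exact Quotient.sound h
          · intro h; exact Quotient.exact (by rw [h]; exact (Quotient.out_eq c).symm)
        rw [hset] at this
        rw [this]
      · intro d
        show layerSem _ _ _ _ d = layerSem _ _ _ _ d.out
        simp only [layerSem, heq, qA, qb, qW]
        congr 2
        rw [sum_grouped (P i) (W i) d.out _ hcons]
end

section
/- Invariance of refinement above any bisimulation: let P' be an NN-bisimulation of N and P a layered partition coarser than P'. If S' ∈ P_i and S ∈ P_{i-1}, then replacing S' by SplitPre(S', S) yields a partition still coarser than P'; i.e., no class of P' contained in S' is split by SplitPre(S', S). -/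
theorem preSum_eq_sum_fiberwise {α β κ : Type*} [Fintype α] [Fintype κ]
    (W : α → β → ℝ) (S : Set α) (g : α → κ) (s : β) :
    preSum W S s = ∑ k, preSum W (S ∩ g ⁻¹' {k}) s := by
  classical
  simp only [preSum, Set.mem_inter_iff, Set.mem_preimage, Set.mem_singleton_iff]
  rw [← Finset.sum_fiberwise _ g]
  refine Finset.sum_congr rfl fun k _ => ?_
  rw [Finset.filter_filter]

theorem Quotient.mk_preimage_singleton {α : Type*} (P : Setoid α) (c : Quotient P) :
    Quotient.mk P ⁻¹' {c} = {x | P.r x c.out} := by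
  ext x
  exact Quotient.mk_eq_iff_out

open Classical in
theorem preSum_inter_class_of_saturated {α β : Type*} [Fintype α] (W : α → β → ℝ)
    {P : Setoid α} {S : Set α} (hS : ∀ x y, P.r x y → (x ∈ S ↔ y ∈ S)) (t : α) (s : β) :
    preSum W (S ∩ {x | P.r x t}) s = if t ∈ S then preSum W {x | P.r x t} s else 0 := by
  split_ifs with ht
  · have hsub : {x | P.r x t} ⊆ S := fun x hx => (hS x t hx).mpr ht
    rw [Set.inter_eq_right.mpr hsub]
  · have hdisj : S ∩ {x | P.r x t} = ∅ :=
      Set.disjoint_iff_inter_eq_empty.mp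
        (Set.disjoint_right.mpr fun x hx hxS => ht ((hS x t hx).mp hxS))
    simp [hdisj, preSum]

open Classical in
theorem preSum_eq_sum_classes_of_saturated {α β : Type*} [Fintype α] (W : α → β → ℝ)
    {P : Setoid α} {S : Set α} (hS : ∀ x y, P.r x y → (x ∈ S ↔ y ∈ S)) (s : β) :
    preSum W S s = ∑ c : Quotient P, if c.out ∈ S then preSum W {x | P.r x c.out} s else 0 := by
  rw [preSum_eq_sum_fiberwise W S (Quotient.mk P)]
  simp only [Quotient.mk_preimage_singleton, preSum_inter_class_of_saturated W hS]

/-- splitting by pre-sums w.r.t. a union `S` of classes of a bisimulation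
`P'` never separates two `P'`-related nodes: their pre-sums into `S` agree. -/
theorem splitPre_respects_bisim {α β : Type*} [Fintype α]
    (W : α → β → ℝ) (b : β → ℝ) (A : β → ℝ → ℝ)
    (Pp' : Setoid α) (Pn' : Setoid β)
    (hbis : isBisimStep W b A Pp' Pn')
    (S : Set α) (hS : ∀ x y, Pp'.r x y → (x ∈ S ↔ y ∈ S))
    (s₁ s₂ : β) (h : Pn'.r s₁ s₂) :
    preSum W S s₁ = preSum W S s₂ := by
  rw [preSum_eq_sum_classes_of_saturated W hS, preSum_eq_sum_classes_of_saturated W hS]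
  simp only [(hbis s₁ s₂ h).2.2]
end

section
/- Non-existence of a coarsest δ-bisimulation in general: there exists a neural network (e.g., one hidden layer with three nodes receiving weights 0.8, 1.0, 1.2 from a single input) and δ = 0.2 such that two distinct δ-NN-bisimulations P (merging the first two hidden nodes) and P' (merging the last two hidden nodes) exist, but no δ-NN-bisimulation is coarser than both P and P'; in particular, merging all three hidden nodes violates the δ bound since |0.8 − 1.2| > 0.2. -/
/-- Hidden-layer weights 0.8, 1.0, 1.2 from a single input node. -/
noncomputable def W19 : Unit → Fin 3 → ℝ := fun _ j => 0.8 + 0.2 * (j.val : ℝ)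

/-- Partition merging the first two hidden nodes. -/
def P19 : Setoid (Fin 3) := Setoid.ker (fun j : Fin 3 => decide (j.val ≤ 1))

/-- Partition merging the last two hidden nodes. -/
def P19' : Setoid (Fin 3) := Setoid.ker (fun j : Fin 3 => decide (1 ≤ j.val))

open Classical in
lemma preSum19 (t : Unit) (s' : Fin 3) :
    preSum W19 {x | (⊤ : Setoid Unit).r x t} s' = W19 () s' := by
  unfold preSum
  rw [Finset.filter_true_of_mem (by intro x _; trivial)]
  simp

/-- non-existence of a coarsest δ-bisimulation in general. -/
theorem no_coarsest_delta_bisim :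
    isDeltaBisimStep W19 (fun _ => 0) (fun _ => id) (⊤ : Setoid Unit) P19 0.2 ∧
    isDeltaBisimStep W19 (fun _ => 0) (fun _ => id) (⊤ : Setoid Unit) P19' 0.2 ∧
    P19 ≠ P19' ∧
    ¬ ∃ Q : Setoid (Fin 3),
        isDeltaBisimStep W19 (fun _ => 0) (fun _ => id) (⊤ : Setoid Unit) Q 0.2 ∧
        P19 ≤ Q ∧ P19' ≤ Q := by
  refine ⟨?_, ?_, ?_, ?_⟩
  · intro s₁ s₂ h
    refine ⟨rfl, by norm_num, fun t => ?_⟩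
    rw [preSum19, preSum19]
    unfold P19 at h
    fin_cases s₁ <;> fin_cases s₂ <;> simp_all [P19, Setoid.ker_def, Setoid.ker, Function.onFun, W19] <;> norm_num [abs_le]
  · intro s₁ s₂ h
    refine ⟨rfl, by norm_num, fun t => ?_⟩
    rw [preSum19, preSum19]
    unfold P19' at h
    fin_cases s₁ <;> fin_cases s₂ <;> simp_all [P19', Setoid.ker_def, Setoid.ker, Function.onFun, W19] <;> norm_num [abs_le]
  · intro h
    have h1 : P19.r 0 1 := rfl
    rw [h] at h1
    exact absurd h1 (by unfold P19'; simp [Setoid.ker_def, Function.onFun])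
  · rintro ⟨Q, hQ, hle, hle'⟩
    have r01 : Q.r 0 1 := hle (show P19.r 0 1 from rfl)
    have r12 : Q.r 1 2 := hle' (show P19'.r 1 2 from rfl)
    have r02 : Q.r 0 2 := Q.trans r01 r12
    have := (hQ 0 2 r02).2.2 ()
    rw [preSum19, preSum19] at this
    simp only [W19] at this
    norm_num [abs_le] at this
end
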